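/- Let κ > 0 and α ∈ (0, κ/(κ+1)). Let μ_t^α be the α-stable subordinator law with Laplace transform e^{-t x^α}. Then for every t > 0 there exists δ_0 > 0 such that for all δ > δ_0, ∫_0^∞ e^{δ/s^κ} μ_t^α(ds) = ∞. -/

import Mathlib

/-!
The Laplace transform gives a small-ball estimate: for `x > 0` and `ε = 2 t x ^ α / x`,
`exp (-(t x ^ α)) ≤ μ [0, ε] + exp (-(x ε)) = μ [0, ε] + exp (-2 t x ^ α)`, so
`μ (0, ε] ≥ exp (-2 t x ^ α)` once `t x ^ α ≥ log 2` (the atom at `0` vanishes because the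
transform tends to `0`). On `(0, ε]` the integrand is at least `exp (δ / ε ^ κ)`, and
`δ / ε ^ κ = δ (2 t) ^ (-κ) x ^ (κ (1 - α))`. Since `α < κ / (κ + 1)` means `α < κ (1 - α)`,
this beats `2 t x ^ α` as `x → ∞`, so the integral is infinite for every `δ > 0`.
-/

open MeasureTheory Real Set Filter Topology

section LaplaceTransform

variable {μ : Measure ℝ}

lemma integrableOn_exp_neg_mul_Ici [IsFiniteMeasure μ] {x : ℝ} (hx : 0 ≤ x) :
    IntegrableOn (fun s ↦ exp (-(x * s))) (Ici 0) μ := by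
  refine Integrable.mono' (integrable_const 1) (by fun_prop) ?_
  refine (ae_restrict_iff' measurableSet_Ici).2 (ae_of_all _ fun s (hs : 0 ≤ s) ↦ ?_)
  rw [norm_of_nonneg (exp_nonneg _), exp_le_one_iff]
  nlinarith

lemma measureReal_singleton_zero_le_setIntegral_exp [IsFiniteMeasure μ] {x : ℝ} (hx : 0 ≤ x) :
    μ.real {0} ≤ ∫ s in Ici 0, exp (-(x * s)) ∂μ := by
  calc μ.real {0} = ∫ s in {0}, exp (-(x * s)) ∂μ := by simp [Measure.real]
    _ ≤ ∫ s in Ici 0, exp (-(x * s)) ∂μ :=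
      setIntegral_mono_set (integrableOn_exp_neg_mul_Ici hx)
        (ae_of_all _ fun _ ↦ (exp_pos _).le) (singleton_subset_iff.2 self_mem_Ici).eventuallyLE

lemma measure_singleton_zero_of_tendsto_setIntegral_exp [IsFiniteMeasure μ]
    (h : Tendsto (fun x ↦ ∫ s in Ici 0, exp (-(x * s)) ∂μ) atTop (𝓝 0)) : μ {0} = 0 := by
  have : μ.real {0} ≤ 0 := ge_of_tendsto h <|
    (eventually_ge_atTop 0).mono fun _ hx ↦ measureReal_singleton_zero_le_setIntegral_exp hx
  exact (measureReal_eq_zero_iff (measure_ne_top μ _)).1 (le_antisymm this measureReal_nonneg)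

lemma setIntegral_exp_neg_mul_le [IsProbabilityMeasure μ] {x : ℝ} (hx : 0 ≤ x) (ε : ℝ) :
    ∫ s in Ici 0, exp (-(x * s)) ∂μ ≤ μ.real (Icc 0 ε) + exp (-(x * ε)) := by
  have hpt : ∀ s ∈ Ici (0 : ℝ), exp (-(x * s)) ≤ (Icc 0 ε).indicator 1 s + exp (-(x * ε)) := by
    intro s (hs : 0 ≤ s)
    by_cases hsε : s ≤ ε
    · rw [indicator_of_mem (show s ∈ Icc 0 ε from ⟨hs, hsε⟩), Pi.one_apply]
      have : exp (-(x * s)) ≤ 1 := exp_le_one_iff.2 (by nlinarith)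
      linarith [exp_pos (-(x * ε))]
    · rw [indicator_of_notMem (fun h ↦ hsε h.2)]
      have : -(x * s) ≤ -(x * ε) := by nlinarith
      simpa using this
  calc ∫ s in Ici 0, exp (-(x * s)) ∂μ
      ≤ ∫ s in Ici 0, ((Icc 0 ε).indicator 1 s + exp (-(x * ε))) ∂μ :=
        setIntegral_mono_on (integrableOn_exp_neg_mul_Ici hx)
          (((integrable_indicator_iff measurableSet_Icc).2 (integrable_const 1).integrableOn).add
            (integrable_const _)) measurableSet_Ici hpt
    _ = (μ.restrict (Ici 0)).real (Icc 0 ε) + μ.real (Ici 0) * exp (-(x * ε)) := by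
        rw [integral_add ((integrable_indicator_iff measurableSet_Icc).2
          (integrable_const 1).integrableOn) (integrable_const _),
          integral_indicator_one measurableSet_Icc, setIntegral_const, smul_eq_mul]
    _ ≤ μ.real (Icc 0 ε) + exp (-(x * ε)) := by
        rw [measureReal_restrict_apply measurableSet_Icc]
        gcongr ?_ + ?_
        · exact measureReal_mono inter_subset_left
        · exact mul_le_of_le_one_left (exp_nonneg _) measureReal_le_one

lemma ofReal_exp_neg_two_mul_le_measure_Ioc [IsProbabilityMeasure μ] (h0 : μ {0} = 0) {x u : ℝ}
    (hx : 0 < x) (hu : log 2 ≤ u) (hL : exp (-u) ≤ ∫ s in Ici 0, exp (-(x * s)) ∂μ) :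
    ENNReal.ofReal (exp (-(2 * u))) ≤ μ (Ioc 0 (2 * u / x)) := by
  have hball := hL.trans (setIntegral_exp_neg_mul_le hx.le (2 * u / x))
  rw [mul_div_cancel₀ _ hx.ne'] at hball
  have htwo : 2 * exp (-(2 * u)) ≤ exp (-u) := by
    have : 2 ≤ exp u := by simpa [exp_log] using exp_le_exp.2 hu
    calc 2 * exp (-(2 * u)) ≤ exp u * exp (-(2 * u)) := by gcongr
      _ = exp (-u) := by rw [← exp_add]; ring_nf
  rw [← Icc_sdiff_left, measure_sdiff_null h0]
  exact ENNReal.ofReal_le_of_le_toReal (by rw [← measureReal_def]; linarith)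

end LaplaceTransform

lemma ofReal_exp_div_rpow_mul_measure_Ioc_le (μ : Measure ℝ) {δ κ ε : ℝ} (hδ : 0 ≤ δ)
    (hκ : 0 ≤ κ) :
    ENNReal.ofReal (exp (δ / ε ^ κ)) * μ (Ioc 0 ε) ≤
      ∫⁻ s in Ioi 0, ENNReal.ofReal (exp (δ / s ^ κ)) ∂μ := by
  have hmono : ∀ s ∈ Ioc (0 : ℝ) ε,
      ENNReal.ofReal (exp (δ / ε ^ κ)) ≤ ENNReal.ofReal (exp (δ / s ^ κ)) := by
    intro s ⟨hs0, hsε⟩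
    gcongr
  calc ENNReal.ofReal (exp (δ / ε ^ κ)) * μ (Ioc 0 ε)
      = ∫⁻ _ in Ioc 0 ε, ENNReal.ofReal (exp (δ / ε ^ κ)) ∂μ := (setLIntegral_const _ _).symm
    _ ≤ ∫⁻ s in Ioc 0 ε, ENNReal.ofReal (exp (δ / s ^ κ)) ∂μ :=
        setLIntegral_mono (by fun_prop) hmono
    _ ≤ ∫⁻ s in Ioi 0, ENNReal.ofReal (exp (δ / s ^ κ)) ∂μ :=
        lintegral_mono_set Ioc_subset_Ioi_self

lemma tendsto_mul_rpow_sub_mul_rpow_atTop {a b p q : ℝ} (ha : 0 < a) (hq : 0 < q) (hqp : q < p) :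
    Tendsto (fun x ↦ a * x ^ p - b * x ^ q) atTop atTop := by
  have h : Tendsto (fun x ↦ x ^ q * (a * x ^ (p - q) - b)) atTop atTop :=
    (tendsto_rpow_atTop hq).atTop_mul_atTop₀ (tendsto_atTop_add_const_right _ _
      ((tendsto_rpow_atTop (sub_pos.2 hqp)).const_mul_atTop ha))
  refine h.congr' ((eventually_gt_atTop 0).mono fun x hx ↦ ?_)
  rw [mul_sub, mul_left_comm, ← rpow_add hx, add_sub_cancel, mul_comm (x ^ q)]

theorem stmt_13_general (κ α : ℝ) (hκ : 0 < κ) (hα0 : 0 < α) (hα1 : α < κ / (κ + 1))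
    (t : ℝ) (ht : 0 < t)
    (μ : Measure ℝ) [IsProbabilityMeasure μ]
    (hlaplace : ∀ x : ℝ, 0 ≤ x →
      ∫ s in Ici (0:ℝ), Real.exp (-(x * s)) ∂μ = Real.exp (-(t * x ^ α))) :
    ∃ δ₀ : ℝ, 0 < δ₀ ∧ ∀ δ : ℝ, δ₀ < δ →
      ∫⁻ s in Ioi (0:ℝ), ENNReal.ofReal (Real.exp (δ / s ^ κ)) ∂μ = ⊤ := by
  have htx : Tendsto (fun x ↦ t * x ^ α) atTop atTop :=
    (tendsto_rpow_atTop hα0).const_mul_atTop ht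
  have hatom : μ {0} = 0 := measure_singleton_zero_of_tendsto_setIntegral_exp <|
    (tendsto_exp_atBot.comp (tendsto_neg_atTop_atBot.comp htx)).congr'
      ((eventually_ge_atTop 0).mono fun x hx ↦ (hlaplace x hx).symm)
  refine ⟨1, one_pos, fun δ hδ ↦ ?_⟩
  have hexponent : α < κ * (1 - α) := by
    rw [lt_div_iff₀ (by linarith)] at hα1
    linarith
  have hgrowth := tendsto_exp_atTop.comp <|
    tendsto_mul_rpow_sub_mul_rpow_atTop (a := δ / (2 * t) ^ κ) (b := 2 * t)
      (div_pos (by linarith) (rpow_pos_of_pos (by positivity) κ)) hα0 hexponent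
  refine ENNReal.eq_top_of_forall_nnreal_le fun r ↦ ?_
  obtain ⟨x, hx0, hxu, hxr⟩ := ((eventually_gt_atTop 0).and
    ((htx.eventually_ge_atTop (log 2)).and (hgrowth.eventually_ge_atTop r))).exists
  set ε := 2 * (t * x ^ α) / x with hε
  have hrate : δ / ε ^ κ = δ / (2 * t) ^ κ * x ^ (κ * (1 - α)) := by
    rw [hε, show 2 * (t * x ^ α) / x = 2 * t * x ^ (α - 1) by rw [rpow_sub_one hx0.ne']; ring,
      mul_rpow (by positivity) (by positivity), ← rpow_mul hx0.le,
      show (α - 1) * κ = -(κ * (1 - α)) by ring, rpow_neg hx0.le, div_mul_eq_div_div,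
      div_inv_eq_mul]
  calc (r : ENNReal)
      ≤ ENNReal.ofReal (exp (δ / (2 * t) ^ κ * x ^ (κ * (1 - α)) - 2 * t * x ^ α)) :=
        ENNReal.ofReal_coe_nnreal.symm.trans_le (ENNReal.ofReal_le_ofReal hxr)
    _ = ENNReal.ofReal (exp (δ / ε ^ κ)) * ENNReal.ofReal (exp (-(2 * (t * x ^ α)))) := by
        rw [← ENNReal.ofReal_mul (exp_nonneg _), ← exp_add, hrate]
        ring_nf
    _ ≤ ENNReal.ofReal (exp (δ / ε ^ κ)) * μ (Ioc 0 ε) := by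
        gcongr
        exact ofReal_exp_neg_two_mul_le_measure_Ioc hatom hx0 hxu (hlaplace x hx0.le).ge
    _ ≤ _ := ofReal_exp_div_rpow_mul_measure_Ioc_le μ (by linarith) hκ.le

theorem stmt_13 (κ α : ℝ) (hκ : 0 < κ) (hα0 : 0 < α) (hα1 : α < κ / (κ + 1))
    (t : ℝ) (ht : 0 < t)
    (μ : Measure ℝ) [IsProbabilityMeasure μ] (hsupp : μ (Iio (0:ℝ)) = 0)
    (hlaplace : ∀ x : ℝ, 0 ≤ x →
      ∫ s in Ici (0:ℝ), Real.exp (-(x * s)) ∂μ = Real.exp (-(t * x ^ α))) :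
    ∃ δ₀ : ℝ, 0 < δ₀ ∧ ∀ δ : ℝ, δ₀ < δ →
      ∫⁻ s in Ioi (0:ℝ), ENNReal.ofReal (Real.exp (δ / s ^ κ)) ∂μ = ⊤ :=
  stmt_13_general κ α hκ hα0 hα1 t ht μ hlaplace
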